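/- arXiv:2203.16684 — 4 statements merged into one kernel-verified Lean document; each statement's English description precedes it below -/
import Mathlib

section
/- If F : S_B → S_B is strict and time-invariant and T : S_A × S_B → S_B is causal and time-invariant, then the operator Q defined by Q(s) = fix α. T(s, F(α)) is causal and time-invariant. -/
def delay {A : Type*} [AddCommGroup A] (s : ℕ → A) : ℕ → A
  | 0 => 0
  | (n + 1) => s n

theorem fix_causal_time_invariant {A B : Type*} [AddCommGroup A] [AddCommGroup B]
    (F : (ℕ → B) → (ℕ → B))
    (hFstrict : ∀ (s s' : ℕ → B) (t : ℕ), (∀ i < t, s i = s' i) → F s t = F s' t)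
    (hFti : ∀ s : ℕ → B, F (delay s) = delay (F s))
    (T : (ℕ → A) → (ℕ → B) → (ℕ → B))
    (hTcausal : ∀ (s s' : ℕ → A) (u u' : ℕ → B) (t : ℕ),
      (∀ i ≤ t, s i = s' i) → (∀ i ≤ t, u i = u' i) → T s u t = T s' u' t)
    (hTti : ∀ (s : ℕ → A) (u : ℕ → B), T (delay s) (delay u) = delay (T s u))
    (Q : (ℕ → A) → (ℕ → B))
    (hQ : ∀ s : ℕ → A, Q s = T s (F (Q s))) :
    (∀ (s s' : ℕ → A) (t : ℕ), (∀ i ≤ t, s i = s' i) → Q s t = Q s' t) ∧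
      (∀ s : ℕ → A, Q (delay s) = delay (Q s)) := by
  -- causality, proved by strong induction
  have causal : ∀ (t : ℕ) (s s' : ℕ → A), (∀ i ≤ t, s i = s' i) → Q s t = Q s' t := by
    intro t
    induction t using Nat.strong_induction_on with
    | _ t ih =>
      intro s s' hs
      rw [hQ s, hQ s']
      apply hTcausal _ _ _ _ _ hs
      intro i hi
      apply hFstrict
      intro j hj
      exact ih j (lt_of_lt_of_le hj hi) s s' (fun k hk => hs k (le_trans hk (le_trans (le_of_lt hj) hi)))
  refine ⟨fun s s' t h => causal t s s' h, ?_⟩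
  -- time invariance: delay (Q s) is also a fixed point; use uniqueness
  intro s
  have key : delay (Q s) = T (delay s) (F (delay (Q s))) := by
    rw [hFti, hTti, ← hQ]
  -- uniqueness of fixed points of α ↦ T (delay s) (F α)
  have uniq : ∀ (t : ℕ), Q (delay s) t = delay (Q s) t := by
    intro t
    induction t using Nat.strong_induction_on with
    | _ t ih =>
      rw [hQ (delay s), key]
      apply hTcausal _ _ _ _ _ (fun i _ => rfl)
      intro i hi
      apply hFstrict
      intro j hj
      exact ih j (lt_of_lt_of_le hj hi)
  exact funext uniq
end

section
/- Invariance of linear time-invariant operators under incrementalization: if Q : S_A → S_B is a group homomorphism (linear) and time-invariant (Q ∘ z⁻¹ = z⁻¹ ∘ Q), then Q^Δ = Q. -/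
def diff {A : Type*} [AddCommGroup A] (s : ℕ → A) : ℕ → A := s - delay s

def integ {A : Type*} [AddCommGroup A] (s : ℕ → A) : ℕ → A :=
  fun t => ∑ i ∈ Finset.range (t + 1), s i

/-! Differentiation inverts integration, and an additive time-invariant operator commutes
with differentiation, since `D = id - z⁻¹`. Hence `D ∘ Q ∘ I = Q ∘ D ∘ I = Q`. -/

theorem diff_integ {A : Type*} [AddCommGroup A] (s : ℕ → A) : diff (integ s) = s := by
  funext t
  cases t with
  | zero => simp [diff, delay, integ]
  | succ n => simp [diff, delay, integ, Finset.sum_range_succ]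

theorem AddMonoidHom.map_diff {A B : Type*} [AddCommGroup A] [AddCommGroup B]
    (Q : (ℕ → A) →+ (ℕ → B)) (hti : ∀ s, Q (delay s) = delay (Q s)) (s : ℕ → A) :
    Q (diff s) = diff (Q s) := by
  rw [diff, map_sub, hti, diff]

theorem incremental_of_lti {A B : Type*} [AddCommGroup A] [AddCommGroup B]
    (Q : (ℕ → A) → (ℕ → B))
    (hlin : ∀ s s' : ℕ → A, Q (s + s') = Q s + Q s')
    (hti : Q ∘ delay = delay ∘ Q) :
    diff ∘ Q ∘ integ = Q := by
  funext s
  calc diff (Q (integ s))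
      = AddMonoidHom.mk' Q hlin (diff (integ s)) :=
        ((AddMonoidHom.mk' Q hlin).map_diff (fun u => congrFun hti u) _).symm
    _ = Q s := by rw [diff_integ]; rfl
end

section
/- Bilinear incrementalization formula: if × : S_A × S_B → S_C is a bilinear time-invariant stream operator, then its incremental version satisfies (a × b)^Δ = a × b + z⁻¹(I(a)) × b + a × z⁻¹(I(b)), i.e., D(I(a) × I(b)) = a × b + z⁻¹(I(a)) × b + a × z⁻¹(I(b)). -/
theorem integ_eq_add_delay_integ {A : Type*} [AddCommGroup A] (s : ℕ → A) :
    integ s = s + delay (integ s) := by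
  funext t
  cases t with
  | zero => simp [integ, delay]
  | succ n =>
    simp only [integ, delay, Pi.add_apply]
    rw [Finset.sum_range_succ _ (n + 1), add_comm]

theorem map_add_add_of_biadditive {A B C : Type*} [Add A] [Add B] [AddSemigroup C]
    (T : A → B → C) (hL : ∀ a a' b, T (a + a') b = T a b + T a' b)
    (hR : ∀ a b b', T a (b + b') = T a b + T a b') (a a' : A) (b b' : B) :
    T (a + a') (b + b') = T a b + T a b' + T a' b + T a' b' := by
  rw [hL, hR, hR, ← add_assoc]

theorem incremental_bilinear {A B C : Type*} [AddCommGroup A] [AddCommGroup B] [AddCommGroup C]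
    (T : (ℕ → A) → (ℕ → B) → (ℕ → C))
    (hlinL : ∀ (a a' : ℕ → A) (b : ℕ → B), T (a + a') b = T a b + T a' b)
    (hlinR : ∀ (a : ℕ → A) (b b' : ℕ → B), T a (b + b') = T a b + T a b')
    (hti : ∀ (a : ℕ → A) (b : ℕ → B), delay (T a b) = T (delay a) (delay b))
    (a : ℕ → A) (b : ℕ → B) :
    diff (T (integ a) (integ b)) =
      T a b + T (delay (integ a)) b + T a (delay (integ b)) := by
  have hexpand :=
    map_add_add_of_biadditive T hlinL hlinR a (delay (integ a)) b (delay (integ b))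
  rw [← integ_eq_add_delay_integ, ← integ_eq_add_delay_integ] at hexpand
  rw [diff, hti, hexpand]
  abel
end

section
/- The cycle rule: for a causal time-invariant binary stream operator T, the incremental version of the feedback operator s ↦ fix α. T(s, z⁻¹(α)) equals the feedback operator built from T^Δ: (λ s. fix α. T(s, z⁻¹(α)))^Δ = λ s. fix α. T^Δ(s, z⁻¹(α)). -/
section CausalOperators

variable {A B C : Type*}

def IsCausal (F : (ℕ → A) → (ℕ → B)) : Prop :=
  ∀ a b t, (∀ i ≤ t, a i = b i) → F a t = F b t

def IsStrict (F : (ℕ → A) → (ℕ → B)) : Prop :=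
  ∀ a b t, (∀ i < t, a i = b i) → F a t = F b t

lemma IsStrict.eq_of_fixedPoints {F : (ℕ → A) → (ℕ → A)} (hF : IsStrict F)
    {a b : ℕ → A} (ha : a = F a) (hb : b = F b) : a = b := by
  funext t
  induction t using Nat.strong_induction_on with
  | _ t ih => rw [ha, hb]; exact hF a b t ih

lemma IsCausal.comp {G : (ℕ → B) → (ℕ → C)} {F : (ℕ → A) → (ℕ → B)}
    (hG : IsCausal G) (hF : IsCausal F) : IsCausal (G ∘ F) :=
  fun _ _ t h => hG _ _ t fun i hi => hF _ _ i fun j hj => h j (hj.trans hi)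

lemma IsCausal.comp_isStrict {G : (ℕ → B) → (ℕ → C)} {F : (ℕ → A) → (ℕ → B)}
    (hG : IsCausal G) (hF : IsStrict F) : IsStrict (G ∘ F) :=
  fun _ _ t h => hG _ _ t fun i hi => hF _ _ i fun j hj => h j (hj.trans_le hi)

end CausalOperators

section StreamOperators

variable {A : Type*} [AddCommGroup A]

lemma integ_delay (s : ℕ → A) : integ (delay s) = delay (integ s) := by
  funext t
  cases t with
  | zero => simp [integ, delay]
  | succ n =>
    rw [integ, Finset.sum_range_succ']
    simp [integ, delay]

lemma integ_diff (s : ℕ → A) : integ (diff s) = s := by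
  funext t
  induction t with
  | zero => simp [integ, diff, delay]
  | succ n ih =>
    rw [integ, Finset.sum_range_succ]
    simp_all [integ, diff, delay]

lemma isStrict_delay : IsStrict (delay : (ℕ → A) → (ℕ → A)) := by
  rintro a b (_ | t) h
  · rfl
  · exact h t t.lt_succ_self

lemma isCausal_diff : IsCausal (diff : (ℕ → A) → (ℕ → A)) := by
  intro a b t h
  have hdelay := isStrict_delay a b t fun i hi => h i hi.le
  simp only [diff, Pi.sub_apply, h t le_rfl, hdelay]

lemma isCausal_integ : IsCausal (integ : (ℕ → A) → (ℕ → A)) :=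
  fun _ _ _ h => Finset.sum_congr rfl fun i hi =>
    h i (Nat.lt_succ_iff.mp (Finset.mem_range.mp hi))

end StreamOperators

theorem incremental_cycle_rule_general {A : Type*} [AddCommGroup A]
    (T : (ℕ → A) → (ℕ → A) → (ℕ → A))
    (hTcausal : ∀ (s s' u u' : ℕ → A) (t : ℕ),
      (∀ i ≤ t, s i = s' i) → (∀ i ≤ t, u i = u' i) → T s u t = T s' u' t)
    (Q₁ Q₂ : (ℕ → A) → (ℕ → A))
    (hQ₁ : ∀ s, Q₁ s = T s (delay (Q₁ s)))
    (hQ₂ : ∀ s, Q₂ s = diff (T (integ s) (integ (delay (Q₂ s))))) :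
    diff ∘ Q₁ ∘ integ = Q₂ := by
  funext s
  have hT : IsCausal (T (integ s)) := fun u u' t => hTcausal _ _ u u' t fun _ _ => rfl
  have hstrict : IsStrict fun α => diff (T (integ s) (integ (delay α))) :=
    ((isCausal_diff.comp hT).comp isCausal_integ).comp_isStrict isStrict_delay
  have hfix :
      diff (Q₁ (integ s)) = diff (T (integ s) (integ (delay (diff (Q₁ (integ s)))))) := by
    rw [integ_delay, integ_diff, ← hQ₁]
  exact hstrict.eq_of_fixedPoints hfix (hQ₂ s)

/-- The cycle rule: the incremental version of the feedback operator
`s ↦ fix α. T(s, z⁻¹ α)` is the feedback operator built from `T^Δ`.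
`Q₁` and `Q₂` are the respective (unique) fixed-point operators. -/
theorem incremental_cycle_rule {A : Type*} [AddCommGroup A]
    (T : (ℕ → A) → (ℕ → A) → (ℕ → A))
    (hTcausal : ∀ (s s' u u' : ℕ → A) (t : ℕ),
      (∀ i ≤ t, s i = s' i) → (∀ i ≤ t, u i = u' i) → T s u t = T s' u' t)
    (hTti : ∀ s u : ℕ → A, T (delay s) (delay u) = delay (T s u))
    (Q₁ Q₂ : (ℕ → A) → (ℕ → A))
    (hQ₁ : ∀ s, Q₁ s = T s (delay (Q₁ s)))
    (hQ₂ : ∀ s, Q₂ s = diff (T (integ s) (integ (delay (Q₂ s))))) :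
    diff ∘ Q₁ ∘ integ = Q₂ :=
  incremental_cycle_rule_general T hTcausal Q₁ Q₂ hQ₁ hQ₂
end
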